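/- Let G be a finite simple graph and W a walk of G. Let E_o be the set of edges of G traversed by W an odd number of times, and E_e the set of edges traversed by W a nonzero even number of times. Then there exist a walk S of G and a walk W_S of G such that: W_S follows S; W_S is equivalent to W (the multisets of edge-traversals of W_S and W are equal); every edge of E_o is traversed exactly once by S; every edge of E_e is traversed at most twice by S; and every edge traversed by S lies in E_o ∪ E_e. -/
import Mathlib

set_option linter.unusedSectionVars false



open SimpleGraph

/-- `i` half-turns at `u` along the edge `uv`: the walk `(u v u)^i`. -/
def halfTurns {V : Type*} {G : SimpleGraph V} {u v : V} (h : G.Adj u v) : ℕ → G.Walk u u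
  | 0 => .nil
  | n + 1 => .cons h (.cons h.symm (halfTurns h n))

/-- The walk obtained from a walk `S` by performing, just before traversing its `t`-th edge
`u_t u_{t+1}`, `l_t` half-turns `u_t u_{t+1} u_t`.  A walk `W'` *follows* `S` if
`W' = followWith S l` for some list `l` of nonnegative integers. -/
def followWith {V : Type*} {G : SimpleGraph V} : ∀ {a b : V}, G.Walk a b → List ℕ → G.Walk a b
  | _, _, .nil, _ => .nil
  | _, _, .cons h S, l => (halfTurns h (l.headD 0)).append (.cons h (followWith S l.tail))

section AuxLemmas
variable {V : Type*} [DecidableEq V] {G : SimpleGraph V}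

lemma halfTurns_edges {u v : V} (h : G.Adj u v) (n : ℕ) :
    (halfTurns h n).edges = List.replicate (2 * n) s(u, v) := by
  induction n with
  | zero => rfl
  | succ n ih =>
    show (s(u,v) :: s(v,u) :: (halfTurns h n).edges) = _
    rw [ih, Sym2.eq_swap (a := v)]
    rw [show 2 * (n+1) = (2*n) + 1 + 1 by ring, List.replicate_succ, List.replicate_succ]

lemma followWith_nil' : ∀ {c d : V} (S : G.Walk c d), followWith S [] = S
  | _, _, .nil => rfl
  | _, _, .cons h S => by
    show (halfTurns h 0).append (.cons h (followWith S [])) = _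
    rw [followWith_nil' S]; rfl

lemma followWith_cons_edges {c m d : V} (h : G.Adj c m) (S : G.Walk m d) (l : List ℕ) :
    (followWith (.cons h S) l).edges
      = List.replicate (2 * l.headD 0) s(c, m) ++ s(c, m) :: (followWith S l.tail).edges := by
  show ((halfTurns h (l.headD 0)).append (.cons h (followWith S l.tail))).edges = _
  rw [Walk.edges_append, halfTurns_edges, Walk.edges_cons]

lemma followWith_count : ∀ {c d : V} (S : G.Walk c d) (l : List ℕ) (e : Sym2 V),
    ∃ k, (followWith S l).edges.count e = S.edges.count e + 2 * k ∧
      (S.edges.count e = 0 → k = 0)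
  | _, _, .nil, l, e => ⟨0, by simp [followWith]⟩
  | _, _, @Walk.cons _ _ c m d h S, l, e => by
    obtain ⟨k, hk, hk0⟩ := followWith_count S l.tail e
    rw [followWith_cons_edges, List.count_append, List.count_cons, hk,
      List.count_replicate, Walk.edges_cons, List.count_cons]
    simp only [beq_iff_eq]
    split_ifs with he
    · exact ⟨l.headD 0 + k, by omega, fun h => h.elim⟩
    · exact ⟨k, by omega, by omega⟩

lemma followWith_incr : ∀ {c d : V} (S : G.Walk c d) (l : List ℕ) (e : Sym2 V),
    e ∈ S.edges → ∃ l', (followWith S l').edges.Perm (e :: e :: (followWith S l).edges)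
  | _, _, .nil, l, e, he => by simp at he
  | _, _, @Walk.cons _ _ c m d h S, l, e, he => by
    rw [Walk.edges_cons, List.mem_cons] at he
    rcases he with he | he
    · refine ⟨(l.headD 0 + 1) :: l.tail, ?_⟩
      rw [followWith_cons_edges, followWith_cons_edges]
      simp only [List.headD_cons, List.tail_cons]
      rw [show 2 * (l.headD 0 + 1) = (2 * l.headD 0) + 1 + 1 by ring,
        List.replicate_succ, List.replicate_succ, he]
      simp
    · obtain ⟨l', hl'⟩ := followWith_incr S l.tail e he
      refine ⟨l.headD 0 :: l', ?_⟩
      rw [followWith_cons_edges, followWith_cons_edges]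
      simp only [List.headD_cons, List.tail_cons]
      refine (List.Perm.append_left _ (hl'.cons _)).trans ?_
      have h1 : (s(c,m) :: e :: e :: (followWith S l.tail).edges).Perm
          (e :: e :: s(c,m) :: (followWith S l.tail).edges) :=
        (List.Perm.swap e s(c,m) _).trans ((List.Perm.swap e s(c,m) _).cons e)
      refine ((List.Perm.append_left _ h1).trans ?_)
      exact (List.perm_middle).trans ((List.perm_middle).cons e)

lemma split_at_dart : ∀ {a b : V} (W : G.Walk a b) {u v : V} (h : G.Adj u v),
    (Dart.mk (u,v) h) ∈ W.darts → ∃ (A : G.Walk a u) (C : G.Walk v b),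
      W.darts = A.darts ++ (Dart.mk (u,v) h) :: C.darts
  | _, _, .nil, u, v, h, hm => by simp at hm
  | _, _, @Walk.cons _ _ a c b h' W', u, v, h, hm => by
    rw [Walk.darts_cons, List.mem_cons] at hm
    rcases hm with hm | hm
    · have hp : (u, v) = (a, c) := congrArg Dart.toProd hm
      obtain ⟨rfl, rfl⟩ := Prod.mk.injEq .. ▸ hp
      exact ⟨.nil, W', by simp⟩
    · obtain ⟨A', C, hAC⟩ := split_at_dart W' h hm
      exact ⟨.cons h' A', C, by simp [hAC]⟩

lemma perm_aux {α : Type*} (A B C : List α) (e : α) :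
    (A ++ e :: (B ++ e :: C)).Perm (e :: e :: (A ++ (B.reverse ++ C))) := by
  refine (List.perm_middle).trans ?_
  refine List.Perm.cons e ?_
  rw [← List.append_assoc]
  refine (List.perm_middle).trans ?_
  refine List.Perm.cons e ?_
  rw [List.append_assoc]
  exact List.Perm.append_left A (List.Perm.append_right C (List.reverse_perm B).symm)

lemma reduce {a b u v : V} (W : G.Walk a b) (h : G.Adj u v)
    (h2 : 2 ≤ W.darts.count (Dart.mk (u,v) h)) :
    ∃ W' : G.Walk a b, W.edges.Perm (s(u,v) :: s(u,v) :: W'.edges) := by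
  have hm : Dart.mk (u,v) h ∈ W.darts := List.count_pos_iff.mp (by omega)
  obtain ⟨A, C, hAC⟩ := split_at_dart W h hm
  have hcnt := h2
  rw [hAC, List.count_append, List.count_cons_self] at hcnt
  have hcase : Dart.mk (u,v) h ∈ A.darts ∨ Dart.mk (u,v) h ∈ C.darts := by
    rcases Nat.lt_or_ge (A.darts.count (Dart.mk (u,v) h)) 1 with h' | h'
    · exact Or.inr (List.count_pos_iff.mp (by omega))
    · exact Or.inl (List.count_pos_iff.mp (by omega))
  have hedge : ∀ {x y : V} (W₀ : G.Walk x y), W₀.edges = W₀.darts.map Dart.edge := fun _ => rfl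
  rcases hcase with hm' | hm'
  · obtain ⟨A', B, hAB⟩ := split_at_dart A h hm'
    refine ⟨A'.append (B.reverse.append C), ?_⟩
    rw [hedge W, hAC, hAB]
    rw [Walk.edges_append, Walk.edges_append, Walk.edges_reverse]
    simp only [List.map_append, List.map_cons]
    rw [← hedge A', ← hedge B, ← hedge C]
    have : (Dart.mk (u,v) h).edge = s(u,v) := rfl
    rw [this, List.append_assoc, List.cons_append]
    exact perm_aux A'.edges B.edges C.edges s(u,v)
  · obtain ⟨B, C', hBC⟩ := split_at_dart C h hm'
    refine ⟨A.append (B.reverse.append C'), ?_⟩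
    rw [hedge W, hAC, hBC]
    rw [Walk.edges_append, Walk.edges_append, Walk.edges_reverse]
    simp only [List.map_append, List.map_cons]
    rw [← hedge A, ← hedge B, ← hedge C']
    have : (Dart.mk (u,v) h).edge = s(u,v) := rfl
    rw [this]
    exact perm_aux A.edges B.edges C'.edges s(u,v)

lemma count_map_edge_le {u v : V} (h : G.Adj u v) : ∀ (L : List G.Dart),
    (L.map Dart.edge).count s(u,v) ≤ L.count (Dart.mk (u,v) h) + L.count (Dart.mk (v,u) h.symm)
  | [] => le_refl 0
  | d :: L => by
    have ih := count_map_edge_le h L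
    simp only [List.map_cons, List.count_cons]
    by_cases hd : d.edge = s(u,v)
    · rcases (dart_edge_eq_mk'_iff.mp hd) with hp | hp
      · have : d = Dart.mk (u,v) h := Dart.ext _ _ hp
        subst this
        simp only [beq_iff_eq, hd]
        split_ifs with h1 h2 <;> omega
      · have : d = Dart.mk (v,u) h.symm := Dart.ext _ _ hp
        subst this
        simp only [beq_iff_eq, hd]
        split_ifs with h1 h2 <;> omega
    · have h1 : d ≠ Dart.mk (u,v) h := fun he => hd (by rw [he]; rfl)
      have h2 : d ≠ Dart.mk (v,u) h.symm := fun he => hd (by rw [he]; exact Sym2.eq_swap)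
      simp only [beq_iff_eq, hd, h1, h2, if_false]
      omega

lemma exists_dart_two {a b : V} (W : G.Walk a b) (e : Sym2 V) (h3 : 3 ≤ W.edges.count e) :
    ∃ (u v : V) (h : G.Adj u v), e = s(u,v) ∧ 2 ≤ W.darts.count (Dart.mk (u,v) h) := by
  have hme : e ∈ W.edges := List.count_pos_iff.mp (by omega)
  have hee : e ∈ G.edgeSet := W.edges_subset_edgeSet hme
  induction e using Sym2.inductionOn with
  | hf u v =>
    have h : G.Adj u v := hee
    have hle := count_map_edge_le h W.darts
    have hW : W.edges = W.darts.map Dart.edge := rfl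
    rw [← hW] at hle
    rcases Nat.lt_or_ge (W.darts.count (Dart.mk (u,v) h)) 2 with h' | h'
    · exact ⟨v, u, h.symm, Sym2.eq_swap.symm, by omega⟩
    · exact ⟨u, v, h, rfl, h'⟩

end AuxLemmas

/-- every walk `W` of a graph `G` is equivalent (same multiset of
edge-traversals) to a walk `W_S = followWith S l` that follows a walk `S` in which every
edge traversed an odd number of times by `W` appears exactly once, every edge traversed a
nonzero even number of times by `W` appears at most twice, and no other edge appears. -/
theorem stmt_9 {V : Type*} [DecidableEq V] {G : SimpleGraph V} {a b : V} (W : G.Walk a b) :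
    ∃ (c d : V) (S : G.Walk c d) (l : List ℕ),
      (followWith S l).edges.Perm W.edges ∧
      (∀ e : Sym2 V, Odd (W.edges.count e) → S.edges.count e = 1) ∧
      (∀ e : Sym2 V, W.edges.count e ≠ 0 → Even (W.edges.count e) → S.edges.count e ≤ 2) ∧
      (∀ e ∈ S.edges, W.edges.count e ≠ 0) := by
  obtain ⟨n, hn⟩ : ∃ n, W.edges.length = n := ⟨_, rfl⟩
  induction n using Nat.strong_induction_on generalizing W with
  | _ n IH =>
  by_cases hall : ∀ e, W.edges.count e ≤ 2
  · refine ⟨a, b, W, [], by rw [followWith_nil'], fun e ho => ?_, fun e h0 _ => hall e, fun e hme => ?_⟩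
    · obtain ⟨k, hk⟩ := ho
      have := hall e
      omega
    · exact (List.count_pos_iff.mpr hme).ne'
  · push_neg at hall
    obtain ⟨e₀, he₀⟩ := hall
    obtain ⟨u, v, hadj, rfl, hd2⟩ := exists_dart_two W e₀ (by omega)
    obtain ⟨W', hperm⟩ := reduce W hadj hd2
    have hcnt : ∀ e', W.edges.count e' =
        W'.edges.count e' + (if e' = s(u,v) then 2 else 0) := by
      intro e'
      rw [hperm.count_eq, List.count_cons, List.count_cons]
      rcases eq_or_ne e' s(u,v) with rfl | hne
      · simp
      · simp [beq_iff_eq, Ne.symm hne, hne]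
    have hlen : W'.edges.length < n := by
      have := hperm.length_eq
      simp only [List.length_cons] at this
      omega
    obtain ⟨c, d, S, l, h1, h2, h3, h4⟩ := IH _ hlen W' rfl
    have hW'c : 1 ≤ W'.edges.count s(u,v) := by
      have := hcnt s(u,v); simp at this; omega
    have heS : s(u,v) ∈ S.edges := by
      obtain ⟨k, hk, hk0⟩ := followWith_count S l s(u,v)
      have hc := h1.count_eq s(u,v)
      rw [hk] at hc
      by_contra hns
      have hz : S.edges.count s(u,v) = 0 := List.count_eq_zero.mpr hns
      have := hk0 hz
      omega
    obtain ⟨l', hl'⟩ := followWith_incr S l s(u,v) heS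
    refine ⟨c, d, S, l', ?_, ?_, ?_, ?_⟩
    · exact hl'.trans (((h1.cons s(u,v)).cons s(u,v)).trans hperm.symm)
    · intro e' ho
      refine h2 e' ?_
      have hc := hcnt e'
      rcases ho with ⟨k, hk⟩
      rcases eq_or_ne e' s(u,v) with rfl | hne
      · rw [if_pos rfl] at hc
        exact ⟨k - 1, by omega⟩
      · rw [if_neg hne] at hc
        exact ⟨k, by omega⟩
    · intro e' h0 hev
      have hc := hcnt e'
      obtain ⟨k, hk⟩ := hev
      rcases eq_or_ne e' s(u,v) with rfl | hne
      · rw [if_pos rfl] at hc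
        exact h3 _ (by omega) ⟨k - 1, by omega⟩
      · rw [if_neg hne] at hc
        exact h3 _ (by omega) ⟨k, by omega⟩
    · intro e' hme
      have := h4 e' hme
      have hc := hcnt e'
      rcases eq_or_ne e' s(u,v) with rfl | hne
      · rw [if_pos rfl] at hc; omega
      · rw [if_neg hne] at hc; omega
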